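/- Let n ≥ 1 and λ a partition of length at most 2n. Then the successor map suc is injective on SST_{2n}(λ). -/

import Mathlib

/-- `part lam i` : the `i`-th part (1-indexed) of the partition `lam`,
with `lam_i = 0` for `i > ℓ(lam)`. -/
def part (lam : List ℕ) (i : ℕ) : ℕ := lam.getD (i - 1) 0

/-- A partition: a weakly decreasing finite sequence of positive integers. -/
def IsPartition (lam : List ℕ) : Prop :=
  lam.Pairwise (· ≥ ·) ∧ ∀ x ∈ lam, 0 < x

/-- `remAux` computes the set of removable entries of a strictly increasing
sequence, given as a list in *reversed* order (so the head is the last entry). -/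
def remAux : List ℕ → Finset ℕ
  | [] => ∅
  | [_] => ∅
  | b :: a :: rest =>
    if Even b ∧ a + 1 = b ∧ b + (remAux rest).card + 1 < 2 * (rest.length + 2) then
      insert a (insert b (remAux rest))
    else remAux (a :: rest)

/-- `remSet 𝐚` : the set `Rem(𝐚)` of removable entries of the strictly
increasing sequence `𝐚 = (a_1, …, a_l)` (given in its natural order). -/
def remSet (l : List ℕ) : Finset ℕ := remAux l.reverse

/-- `redSeq 𝐚` : the reduction `red(𝐚)`, i.e. `𝐚` with the removable entries
removed. -/
def redSeq (l : List ℕ) : List ℕ := l.filter (fun x => decide (x ∉ remSet l))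

/-!  We represent a semistandard tableau by its list of columns (left to
right), each column being the list of its entries read from top to bottom. -/

/-- Column insertion `w → T` of `w` into the tableau `T` (given as a list of
columns): `w` is inserted into the first column, bumping the smallest entry
`≥ w` into the next column, and so on; the last bumped entry is placed at the
bottom of the first column that accommodates it. -/
def colInsert (w : ℕ) : List (List ℕ) → List (List ℕ)
  | [] => [[w]]
  | c :: rest =>
    match c.dropWhile (fun y => decide (y < w)) with
    | [] => (c ++ [w]) :: rest
    | x :: c₂ => (c.takeWhile (fun y => decide (y < w)) ++ w :: c₂) :: colInsert x rest

/-- Insert the entries of the column `b = (b_1, …, b_k)` (top to bottom)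
successively into `T`; this is the plactic product `b * T`. -/
def insertCol (b : List ℕ) (T : List (List ℕ)) : List (List ℕ) :=
  b.foldl (fun t w => colInsert w t) T

/-- The successor map: `suc T = red(𝐚) * T'`, where `𝐚` is the first column
of `T` and `T'` consists of the remaining columns. -/
def suc : List (List ℕ) → List (List ℕ)
  | [] => []
  | c :: rest => insertCol (redSeq c) rest

/-- `rowLen T i` : the length `λ_i` of the `i`-th row of the tableau `T`,
i.e. the number of columns of length `≥ i`. -/
def rowLen (T : List (List ℕ)) (i : ℕ) : ℕ :=
  T.countP (fun c => decide (i ≤ c.length))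

/-- Validity of the column representation of a semistandard tableau with
entries in `[1, m]`: columns are nonempty and strictly increasing (top to
bottom) with entries in `[1, m]`, column lengths weakly decrease from left to
right, and rows weakly increase from left to right. -/
def IsTableau (m : ℕ) (T : List (List ℕ)) : Prop :=
  (∀ c ∈ T, c ≠ []) ∧
  (∀ c ∈ T, c.Chain' (· < ·)) ∧
  (∀ c ∈ T, ∀ x ∈ c, 1 ≤ x ∧ x ≤ m) ∧
  T.Chain' (fun c c' => c'.length ≤ c.length ∧
    ∀ r < c'.length, c.getD r 0 ≤ c'.getD r 0)

/-- `T` has shape `lam`. -/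
def hasShape (T : List (List ℕ)) (lam : List ℕ) : Prop :=
  ∀ i, 1 ≤ i → rowLen T i = part lam i

/-- `T` is symplectic: the entry in the `k`-th row of the first column is
at least `2k - 1`. -/
def IsSymplectic (T : List (List ℕ)) : Prop :=
  ∀ k, 1 ≤ k → k ≤ (T.headD []).length → 2 * k - 1 ≤ (T.headD []).getD (k - 1) 0

/-!
Tableaux of equal shape have first columns of equal length and remainders `T₁'`, `T₂'` of equal
shape, so counting boxes `red(𝐚₁)` and `red(𝐚₂)` have equal lengths. When a strictly increasing
column is inserted, each letter creates its box strictly below the one created by the previous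
letter (row bumping), so the last new box ends strictly lower than every other column that grew:
the two shapes alone locate it. Reverse bumping from it recovers the last letter and the previous
tableau, and induction gives `red(𝐚₁) = red(𝐚₂)` and `T₁' = T₂'`.

Finally `𝐚` is recovered from `red(𝐚)` and its length. The invariant `2 l ≤ a_l + |Rem(𝐚)|` (with
`a_l` rounded up to an even number) forces `a_l = 2 l - 2 - |Rem(a_1, …, a_{l-2})|` whenever the top
pair is removed, and it excludes that, of two sequences with the same reduction and length, only one
loses its top pair.
-/

section Reduction

abbrev Removable (b a : ℕ) (rest : List ℕ) : Prop :=
  Even b ∧ a + 1 = b ∧ b + (remAux rest).card + 1 < 2 * (rest.length + 2)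

def redRev (u : List ℕ) : List ℕ := u.filter (fun x => decide (x ∉ remAux u))

lemma redSeq_eq_reverse_redRev (l : List ℕ) : redSeq l = (redRev l.reverse).reverse := by
  rw [redRev, List.filter_reverse, List.reverse_reverse]
  rfl

lemma mem_of_mem_remAux {u : List ℕ} {x : ℕ} (hx : x ∈ remAux u) : x ∈ u := by
  induction u using remAux.induct with
  | case1 => simp [remAux] at hx
  | case2 => simp [remAux] at hx
  | case3 b a rest h ih =>
    rw [remAux, if_pos h] at hx
    simp only [Finset.mem_insert] at hx
    rcases hx with rfl | rfl | hx <;> simp [*]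
  | case4 b a rest h _ ih =>
    rw [remAux, if_neg h] at hx
    exact List.mem_cons_of_mem b (ih hx)

lemma notMem_remAux_of_forall_lt {u : List ℕ} {x : ℕ} (h : ∀ y ∈ u, y < x) :
    x ∉ remAux u :=
  fun hx => lt_irrefl x (h x (mem_of_mem_remAux hx))

section TopPair

variable {b a : ℕ} {rest : List ℕ}

lemma remAux_of_removable (h : Removable b a rest) :
    remAux (b :: a :: rest) = insert a (insert b (remAux rest)) := by
  rw [remAux, if_pos h]

lemma remAux_of_not_removable (h : ¬ Removable b a rest) :
    remAux (b :: a :: rest) = remAux (a :: rest) := by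
  rw [remAux, if_neg h]

lemma remAux_cons_of_not_even (ha : ¬ Even a) : ∀ rest, remAux (a :: rest) = remAux rest
  | [] => rfl
  | _ :: _ => remAux_of_not_removable fun h => ha h.1

lemma card_remAux_of_removable (hd : (b :: a :: rest).Pairwise (· > ·))
    (h : Removable b a rest) : (remAux (b :: a :: rest)).card = (remAux rest).card + 2 := by
  have hab : a < b := List.rel_of_pairwise_cons hd (by simp)
  have hrest : ∀ y ∈ rest, y < a := fun y hy => List.rel_of_pairwise_cons hd.of_cons hy
  rw [remAux_of_removable h, Finset.card_insert_of_notMem, Finset.card_insert_of_notMem]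
  · exact notMem_remAux_of_forall_lt fun y hy => (hrest y hy).trans hab
  · simp only [Finset.mem_insert, not_or]
    exact ⟨hab.ne, notMem_remAux_of_forall_lt hrest⟩

lemma redRev_of_removable (hd : (b :: a :: rest).Pairwise (· > ·))
    (h : Removable b a rest) : redRev (b :: a :: rest) = redRev rest := by
  have hab : a < b := List.rel_of_pairwise_cons hd (by simp)
  rw [redRev, remAux_of_removable h, List.filter_cons_of_neg (by simp),
    List.filter_cons_of_neg (by simp)]
  refine List.filter_congr fun x hx => ?_
  have hxa : x < a := List.rel_of_pairwise_cons hd.of_cons hx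
  simp [hxa.ne, (hxa.trans hab).ne]

lemma redRev_of_not_removable (hd : (b :: a :: rest).Pairwise (· > ·))
    (h : ¬ Removable b a rest) : redRev (b :: a :: rest) = b :: redRev (a :: rest) := by
  have hb : b ∉ remAux (a :: rest) :=
    notMem_remAux_of_forall_lt fun y hy => List.rel_of_pairwise_cons hd hy
  rw [redRev, remAux_of_not_removable h, List.filter_cons_of_pos (by simpa using hb)]
  rfl

end TopPair

lemma length_redRev_add_card_remAux {u : List ℕ} (hu : u.Pairwise (· > ·)) :
    (redRev u).length + (remAux u).card = u.length := by
  induction u using remAux.induct with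
  | case1 => rfl
  | case2 => rfl
  | case3 b a rest h ih =>
    have := ih hu.of_cons.of_cons
    rw [redRev_of_removable hu h, card_remAux_of_removable hu h]
    simp only [List.length_cons]
    omega
  | case4 b a rest h _ ih =>
    have := ih hu.of_cons
    rw [redRev_of_not_removable hu h, remAux_of_not_removable h]
    simp only [List.length_cons] at this ⊢
    omega

lemma even_card_remAux {u : List ℕ} (hu : u.Pairwise (· > ·)) : Even (remAux u).card := by
  induction u using remAux.induct with
  | case1 => simp [remAux]
  | case2 => simp [remAux]
  | case3 b a rest h ih =>
    rw [card_remAux_of_removable hu h]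
    exact (ih hu.of_cons.of_cons).add even_two
  | case4 b a rest h _ ih =>
    rw [remAux_of_not_removable h]
    exact ih hu.of_cons

/-- The symplectic-type invariant `2 l ≤ a_l + |Rem(𝐚)|`, up to rounding `a_l` up to an even
number; here `u` is `𝐚` reversed. -/
lemma two_mul_length_le_headD_add_card_remAux {u : List ℕ} (hu : u.Pairwise (· > ·))
    (hpos : ∀ y ∈ u, 1 ≤ y) (hne : u ≠ []) :
    2 * u.length ≤ u.headD 0 + (remAux u).card + u.headD 0 % 2 := by
  induction u using remAux.induct with
  | case1 => exact absurd rfl hne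
  | case2 x =>
    have := hpos x (by simp)
    simp only [remAux, List.length_singleton, List.headD_cons, Finset.card_empty]
    omega
  | case3 b a rest h ih =>
    have hb2 := Nat.even_iff.mp h.1
    have hab := h.2.1
    rw [card_remAux_of_removable hu h]
    cases rest with
    | nil =>
      have := hpos a (by simp)
      simp only [List.length_cons, List.length_nil, List.headD_cons, remAux]
      omega
    | cons c r =>
      have hca : c < a := List.rel_of_pairwise_cons hu.of_cons (by simp)
      have := ih hu.of_cons.of_cons (fun y hy => hpos y (by simp [hy])) (by simp)
      simp only [List.length_cons, List.headD_cons] at this ⊢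
      omega
  | case4 b a rest h _ ih =>
    have hab : a < b := List.rel_of_pairwise_cons hu (by simp)
    have := ih hu.of_cons (fun y hy => hpos y (List.mem_cons_of_mem b hy)) (by simp)
    rw [remAux_of_not_removable h]
    simp only [List.length_cons, List.headD_cons] at this ⊢
    by_cases hcase : b % 2 = 0 ∧ a + 1 = b
    · -- then `a` is odd, hence not removable, and the parity of `|Rem|` closes the gap
      have ha : ¬ Even a := by rw [Nat.even_iff]; omega
      have hnum : ¬ b + (remAux rest).card + 1 < 2 * (rest.length + 2) :=
        fun h' => h ⟨Nat.even_iff.mpr hcase.1, hcase.2, h'⟩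
      have heven := Nat.even_iff.mp (even_card_remAux hu.of_cons.of_cons)
      rw [remAux_cons_of_not_even ha] at this ⊢
      omega
    · omega

lemma add_card_remAux_eq_of_removable {b a : ℕ} {r : List ℕ}
    (hd : (b :: a :: r).Pairwise (· > ·)) (hpos : ∀ y ∈ a :: r, 1 ≤ y)
    (h : Removable b a r) : b + (remAux r).card = 2 * r.length + 2 := by
  obtain ⟨hb, hab, hnum⟩ := h
  have hb2 := Nat.even_iff.mp hb
  have heven := Nat.even_iff.mp (even_card_remAux hd.of_cons.of_cons)
  have ha := hpos a (by simp)
  cases r with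
  | nil => simp only [remAux, Finset.card_empty, List.length_nil] at hnum ⊢; omega
  | cons c r =>
    have hca : c < a := List.rel_of_pairwise_cons hd.of_cons (by simp)
    have := two_mul_length_le_headD_add_card_remAux hd.of_cons.of_cons
      (fun y hy => hpos y (List.mem_cons_of_mem a hy)) (by simp)
    simp only [List.headD_cons, List.length_cons] at this hnum ⊢
    omega

lemma redRev_ne_of_removable_of_not_removable {b a b' a' : ℕ} {r r' : List ℕ}
    (hu : (b :: a :: r).Pairwise (· > ·)) (hv : (b' :: a' :: r').Pairwise (· > ·))
    (hpv : ∀ y ∈ b' :: a' :: r', 1 ≤ y) (hlen : r.length = r'.length)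
    (h : Removable b a r) (h' : ¬ Removable b' a' r') :
    redRev (b :: a :: r) ≠ redRev (b' :: a' :: r') := by
  intro heq
  rw [redRev_of_removable hu h, redRev_of_not_removable hv h'] at heq
  have hb'a : b' < a :=
    List.rel_of_pairwise_cons hu.of_cons (List.mem_of_mem_filter (heq ▸ List.mem_cons_self))
  have hinv := two_mul_length_le_headD_add_card_remAux hv hpv (by simp)
  have hcard := length_redRev_add_card_remAux hv
  have hcard' := length_redRev_add_card_remAux hu.of_cons.of_cons
  rw [redRev_of_not_removable hv h', ← heq] at hcard
  obtain ⟨-, hab, hnum⟩ := h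
  simp only [List.headD_cons, List.length_cons] at hinv hcard
  omega

lemma eq_of_redRev_eq : ∀ {u v : List ℕ}, u.Pairwise (· > ·) → v.Pairwise (· > ·) →
    (∀ y ∈ u, 1 ≤ y) → (∀ y ∈ v, 1 ≤ y) → u.length = v.length → redRev u = redRev v → u = v
  | [], [], _, _, _, _, _, _ => rfl
  | [x], [y], _, _, _, _, _, h => by simpa [redRev, remAux] using h
  | b :: a :: r, b' :: a' :: r', hu, hv, hpu, hpv, hlen, h => by
    have hlen' : r.length = r'.length := by simpa using hlen
    by_cases hC : Removable b a r <;> by_cases hC' : Removable b' a' r'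
    · rw [redRev_of_removable hu hC, redRev_of_removable hv hC'] at h
      obtain rfl : r = r' := eq_of_redRev_eq hu.of_cons.of_cons hv.of_cons.of_cons
        (fun y hy => hpu y (by simp [hy])) (fun y hy => hpv y (by simp [hy])) hlen' h
      have e := add_card_remAux_eq_of_removable hu (fun y hy => hpu y (.tail b hy)) hC
      have e' := add_card_remAux_eq_of_removable hv (fun y hy => hpv y (.tail b' hy)) hC'
      obtain ⟨-, hab, -⟩ := hC
      obtain ⟨-, hab', -⟩ := hC'
      obtain rfl : b = b' := by omega
      obtain rfl : a = a' := by omega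
      rfl
    · exact absurd h (redRev_ne_of_removable_of_not_removable hu hv hpv hlen' hC hC')
    · exact absurd h.symm (redRev_ne_of_removable_of_not_removable hv hu hpu hlen'.symm hC' hC)
    · rw [redRev_of_not_removable hu hC, redRev_of_not_removable hv hC'] at h
      obtain ⟨rfl, ht⟩ := List.cons.inj h
      rw [eq_of_redRev_eq hu.of_cons hv.of_cons (fun y hy => hpu y (.tail b hy))
        (fun y hy => hpv y (.tail b hy)) (by simpa using hlen) ht]
  | [], _ :: _, _, _, _, _, hlen, _ | _ :: _, [], _, _, _, _, hlen, _
  | [_], _ :: _ :: _, _, _, _, _, hlen, _ | _ :: _ :: _, [_], _, _, _, _, hlen, _ => by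
    simp at hlen

lemma eq_of_redSeq_eq {c₁ c₂ : List ℕ} (h₁ : c₁.Pairwise (· < ·)) (h₂ : c₂.Pairwise (· < ·))
    (hp₁ : ∀ x ∈ c₁, 1 ≤ x) (hp₂ : ∀ x ∈ c₂, 1 ≤ x) (hlen : c₁.length = c₂.length)
    (h : redSeq c₁ = redSeq c₂) : c₁ = c₂ := by
  rw [redSeq_eq_reverse_redRev, redSeq_eq_reverse_redRev, List.reverse_inj] at h
  refine List.reverse_injective (eq_of_redRev_eq ?_ ?_ ?_ ?_ (by simpa using hlen) h)
  · exact List.pairwise_reverse.2 h₁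
  · exact List.pairwise_reverse.2 h₂
  · simpa using hp₁
  · simpa using hp₂

end Reduction

section Insertion

def Dominates (c c' : List ℕ) : Prop :=
  c'.length ≤ c.length ∧ ∀ r < c'.length, c.getD r 0 ≤ c'.getD r 0

def IsSemistandard (T : List (List ℕ)) : Prop :=
  (∀ c ∈ T, c ≠ []) ∧ (∀ c ∈ T, c.IsChain (· < ·)) ∧ T.IsChain Dominates

lemma IsTableau.isSemistandard {m : ℕ} {T : List (List ℕ)} (h : IsTableau m T) :
    IsSemistandard T :=
  ⟨h.1, h.2.1, h.2.2.2⟩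

lemma IsSemistandard.tail {c : List ℕ} {rest : List (List ℕ)} (h : IsSemistandard (c :: rest)) :
    IsSemistandard rest :=
  ⟨fun d hd => h.1 d (.tail c hd), fun d hd => h.2.1 d (.tail c hd), h.2.2.tail⟩

lemma IsSemistandard.dominates_headD {c : List ℕ} {rest : List (List ℕ)}
    (h : IsSemistandard (c :: rest)) : Dominates c (rest.headD []) := by
  cases rest with
  | nil => exact ⟨by simp, by simp⟩
  | cons o rr => exact (List.isChain_cons_cons.mp h.2.2).1

lemma IsSemistandard.cons {c : List ℕ} {rest : List (List ℕ)} (hc : c ≠ [])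
    (hcc : c.IsChain (· < ·)) (hrest : IsSemistandard rest) (hdom : Dominates c (rest.headD [])) :
    IsSemistandard (c :: rest) := by
  refine ⟨List.forall_mem_cons.mpr ⟨hc, hrest.1⟩, List.forall_mem_cons.mpr ⟨hcc, hrest.2.1⟩, ?_⟩
  cases rest with
  | nil => exact .singleton c
  | cons o rr => exact List.isChain_cons_cons.mpr ⟨hdom, hrest.2.2⟩

lemma Dominates.append_singleton {c o : List ℕ} (h : Dominates c o) (w : ℕ) :
    Dominates (c ++ [w]) o :=
  ⟨by simpa using h.1.trans (Nat.le_succ _), fun r hr => by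
    rw [List.getD_append _ _ _ _ (hr.trans_le h.1)]; exact h.2 r hr⟩

def colShape (T : List (List ℕ)) : List ℕ := T.map List.length

lemma length_colShape (T : List (List ℕ)) : (colShape T).length = T.length :=
  List.length_map _

lemma one_le_of_mem_colShape {T : List (List ℕ)} (hT : IsSemistandard T) :
    ∀ y ∈ colShape T, 1 ≤ y := by
  simp only [colShape, List.mem_map, forall_exists_index, and_imp, forall_apply_eq_imp_iff₂]
  exact fun c hc => List.length_pos_iff.mpr (hT.1 c hc)

def addBox (s : List ℕ) (j : ℕ) : List ℕ :=
  if j < s.length then s.set j (s.getD j 0 + 1) else s ++ [1]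

lemma addBox_cons_succ (a : ℕ) (s : List ℕ) (j : ℕ) :
    addBox (a :: s) (j + 1) = a :: addBox s j := by
  unfold addBox
  by_cases hj : j < s.length
  · rw [if_pos (by simp; omega), if_pos hj]
    simp
  · rw [if_neg (by simp; omega), if_neg hj]
    simp

lemma sum_addBox (s : List ℕ) (j : ℕ) : (addBox s j).sum = s.sum + 1 := by
  induction s generalizing j with
  | nil => simp [addBox]
  | cons a s ih =>
    cases j with
    | zero => simp [addBox]; omega
    | succ j => simp [addBox_cons_succ, ih]; omega

lemma getD_addBox_self {s : List ℕ} {j : ℕ} (hj : j ≤ s.length) :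
    (addBox s j).getD j 0 = s.getD j 0 + 1 := by
  induction s generalizing j with
  | nil =>
    obtain rfl : j = 0 := by simpa using hj
    simp [addBox]
  | cons a s ih =>
    cases j with
    | zero => simp [addBox]
    | succ j => simpa [addBox_cons_succ] using ih (by simpa using hj)

lemma getD_addBox_of_ne {s : List ℕ} {i j : ℕ} (hi : i ≤ s.length) (hij : i ≠ j) :
    (addBox s i).getD j 0 = s.getD j 0 := by
  induction s generalizing i j with
  | nil =>
    obtain rfl : i = 0 := by simpa using hi
    obtain ⟨j, rfl⟩ := Nat.exists_eq_succ_of_ne_zero hij.symm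
    simp [addBox]
  | cons a s ih =>
    cases i with
    | zero =>
      obtain ⟨j, rfl⟩ := Nat.exists_eq_succ_of_ne_zero hij.symm
      simp [addBox]
    | succ i =>
      rw [addBox_cons_succ]
      cases j with
      | zero => simp
      | succ j => simpa using ih (by simpa using hi) (by omega)

lemma addBox_injective {j : ℕ} {s s' : List ℕ} (hs : ∀ y ∈ s, 1 ≤ y) (hs' : ∀ y ∈ s', 1 ≤ y)
    (hj : j ≤ s.length) (hj' : j ≤ s'.length) (h : addBox s j = addBox s' j) : s = s' := by
  induction j generalizing s s' with
  | zero =>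
    match s, s' with
    | [], [] => rfl
    | [], a' :: _ => have := hs' a' (by simp); simp [addBox] at h; omega
    | a :: _, [] => have := hs a (by simp); simp [addBox] at h; omega
    | a :: _, a' :: _ => simpa [addBox] using h
  | succ j ih =>
    match s, s' with
    | a :: s, a' :: s' =>
      rw [addBox_cons_succ, addBox_cons_succ, List.cons.injEq] at h
      rw [h.1, ih (fun y hy => hs y (.tail a hy)) (fun y hy => hs' y (.tail a' hy))
        (by simpa using hj) (by simpa using hj') h.2]

-- 0-based
def newBoxCol (w : ℕ) : List (List ℕ) → ℕ
  | [] => 0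
  | c :: rest =>
    match c.dropWhile (fun y => decide (y < w)) with
    | [] => 0
    | x :: _ => newBoxCol x rest + 1

-- 1-based
def newBoxRow (w : ℕ) : List (List ℕ) → ℕ
  | [] => 1
  | c :: rest =>
    match c.dropWhile (fun y => decide (y < w)) with
    | [] => c.length + 1
    | x :: _ => newBoxRow x rest

lemma dropWhile_lt_eq_cons {w x : ℕ} {c c₃ : List ℕ}
    (h : c.dropWhile (fun y => decide (y < w)) = x :: c₃) :
    c = c.takeWhile (fun y => decide (y < w)) ++ x :: c₃ ∧
      (∀ y ∈ c.takeWhile (fun y => decide (y < w)), y < w) ∧ w ≤ x := by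
  refine ⟨by rw [← h, List.takeWhile_append_dropWhile], fun y hy => ?_, ?_⟩
  · simpa using List.mem_takeWhile_imp hy
  · simpa [h] using List.head_dropWhile_not (fun y => decide (y < w)) (l := c) (by simp [h])

lemma forall_lt_of_dropWhile_lt_eq_nil {w : ℕ} {c : List ℕ}
    (h : c.dropWhile (fun y => decide (y < w)) = []) : ∀ y ∈ c, y < w :=
  fun y hy => by simpa using List.dropWhile_eq_nil_iff.mp h y hy

lemma colShape_colInsert (w : ℕ) (T : List (List ℕ)) :
    colShape (colInsert w T) = addBox (colShape T) (newBoxCol w T) := by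
  induction T generalizing w with
  | nil => simp [colInsert, colShape, newBoxCol, addBox]
  | cons c rest ih =>
    cases hdw : c.dropWhile (fun y => decide (y < w)) with
    | nil =>
      simp only [colInsert, newBoxCol, hdw]
      simp [colShape, addBox]
    | cons x c₃ =>
      simp only [colInsert, newBoxCol, hdw]
      have hlen : (c.takeWhile (fun y => decide (y < w)) ++ w :: c₃).length = c.length := by
        conv_rhs => rw [(dropWhile_lt_eq_cons hdw).1]
        simp
      simp only [colShape, List.map_cons] at *
      rw [hlen, ih, addBox_cons_succ]

lemma newBoxCol_le_length (w : ℕ) (T : List (List ℕ)) : newBoxCol w T ≤ T.length := by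
  induction T generalizing w with
  | nil => simp [newBoxCol]
  | cons c rest ih =>
    cases hdw : c.dropWhile (fun y => decide (y < w)) with
    | nil => simp [newBoxCol, hdw]
    | cons x c₃ => simpa [newBoxCol, hdw] using ih x

lemma newBoxCol_le_length_colShape (w : ℕ) (T : List (List ℕ)) :
    newBoxCol w T ≤ (colShape T).length :=
  length_colShape T ▸ newBoxCol_le_length w T

lemma newBoxRow_eq_getD_colShape_colInsert (w : ℕ) (T : List (List ℕ)) :
    newBoxRow w T = (colShape (colInsert w T)).getD (newBoxCol w T) 0 := by
  induction T generalizing w with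
  | nil => simp [colInsert, colShape, newBoxCol, newBoxRow]
  | cons c rest ih =>
    cases hdw : c.dropWhile (fun y => decide (y < w)) with
    | nil =>
      simp only [colInsert, newBoxCol, newBoxRow, hdw]
      simp [colShape]
    | cons x c₃ =>
      simp only [colInsert, newBoxCol, newBoxRow, hdw, colShape, List.map_cons,
        List.getD_cons_succ]
      exact ih x

lemma newBoxRow_eq_getD_colShape_add_one (w : ℕ) (T : List (List ℕ)) :
    newBoxRow w T = (colShape T).getD (newBoxCol w T) 0 + 1 := by
  rw [newBoxRow_eq_getD_colShape_colInsert, colShape_colInsert,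
    getD_addBox_self (newBoxCol_le_length_colShape w T)]

lemma getD_colShape_le_colInsert (w : ℕ) (T : List (List ℕ)) (j : ℕ) :
    (colShape T).getD j 0 ≤ (colShape (colInsert w T)).getD j 0 := by
  have hle := newBoxCol_le_length_colShape w T
  rw [colShape_colInsert]
  by_cases hj : newBoxCol w T = j
  · subst hj; rw [getD_addBox_self hle]; omega
  · rw [getD_addBox_of_ne hle hj]

end Insertion

section Semistandard

lemma getD_append_cons_length (t : List ℕ) (x : ℕ) (c₃ : List ℕ) :
    (t ++ x :: c₃).getD t.length 0 = x := by
  rw [List.getD_append_right _ _ _ _ le_rfl]; simp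

lemma getD_append_cons_of_length_lt {t : List ℕ} {r : ℕ} (x : ℕ) (c₃ : List ℕ)
    (h : t.length < r) : (t ++ x :: c₃).getD r 0 = c₃.getD (r - t.length - 1) 0 := by
  obtain ⟨k, rfl⟩ : ∃ k, r = t.length + (k + 1) := ⟨r - t.length - 1, by omega⟩
  rw [List.getD_append_right _ _ _ _ (by omega), Nat.add_sub_cancel_left]
  simp

lemma getD_append_cons_mono {t : List ℕ} {w x : ℕ} (c₃ : List ℕ) (hwx : w ≤ x) (r : ℕ) :
    (t ++ w :: c₃).getD r 0 ≤ (t ++ x :: c₃).getD r 0 := by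
  rcases lt_trichotomy r t.length with h | rfl | h
  · rw [List.getD_append _ _ _ _ h, List.getD_append _ _ _ _ h]
  · rw [getD_append_cons_length, getD_append_cons_length]; exact hwx
  · rw [getD_append_cons_of_length_lt _ _ h, getD_append_cons_of_length_lt _ _ h]

lemma getD_mem {l : List ℕ} {r : ℕ} (h : r < l.length) : l.getD r 0 ∈ l := by
  rw [List.getD_eq_getElem _ _ h]; exact List.getElem_mem h

lemma isChain_lt_append_singleton {c : List ℕ} {w : ℕ} (hc : c.IsChain (· < ·))
    (hall : ∀ y ∈ c, y < w) : (c ++ [w]).IsChain (· < ·) := by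
  rw [List.isChain_iff_pairwise] at hc ⊢
  rw [List.pairwise_append]
  exact ⟨hc, by simp, fun a ha b hb => by simp at hb; subst hb; exact hall a ha⟩

lemma isChain_lt_replace {t c₃ : List ℕ} {x w : ℕ}
    (hc : (t ++ x :: c₃).IsChain (· < ·)) (ht : ∀ y ∈ t, y < w) (hwx : w ≤ x) :
    (t ++ w :: c₃).IsChain (· < ·) := by
  rw [List.isChain_iff_pairwise, List.pairwise_append] at hc ⊢
  obtain ⟨h1, h2, h3⟩ := hc
  rw [List.pairwise_cons] at h2 ⊢
  refine ⟨h1, ⟨fun z hz => lt_of_le_of_lt hwx (h2.1 z hz), h2.2⟩, ?_⟩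
  intro a ha b hb
  rcases List.mem_cons.mp hb with rfl | hb
  · exact ht a ha
  · exact h3 a ha b (.tail x hb)

lemma lt_of_isChain_append_cons {t c₃ : List ℕ} {x : ℕ}
    (hc : (t ++ x :: c₃).IsChain (· < ·)) : ∀ y ∈ c₃, x < y := by
  rw [List.isChain_iff_pairwise, List.pairwise_append, List.pairwise_cons] at hc
  exact hc.2.1.1

/-- What `Dominates` needs to know about the first column `H` of `x → T` in terms of the first
column `o` of `T`: each entry of `H` is either at least the entry of `o` beside it, or is `x`
sitting below entries of `o` smaller than `x`. -/
def IsInsertionOf (x : ℕ) (o H : List ℕ) : Prop :=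
  H.length ≤ o.length + 1 ∧ (H.length = o.length + 1 → ∀ y ∈ o, y < x) ∧
  ∀ r < H.length, (r < o.length ∧ o.getD r 0 ≤ H.getD r 0) ∨
    (H.getD r 0 = x ∧ ∀ r' < r, r' < o.length ∧ o.getD r' 0 < x)

lemma isInsertionOf_headD_colInsert (x : ℕ) (rest : List (List ℕ)) :
    IsInsertionOf x (rest.headD []) ((colInsert x rest).headD []) := by
  cases rest with
  | nil =>
    refine ⟨by simp [colInsert], by simp, fun r hr => ?_⟩
    obtain rfl : r = 0 := by simpa [colInsert] using hr
    exact Or.inr ⟨rfl, by omega⟩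
  | cons o rr =>
    cases hdw : o.dropWhile (fun y => decide (y < x)) with
    | nil =>
      have hall := forall_lt_of_dropWhile_lt_eq_nil hdw
      simp only [colInsert, hdw, List.headD_cons]
      refine ⟨by simp, fun _ => hall, fun r hr => ?_⟩
      simp only [List.length_append, List.length_cons, List.length_nil] at hr
      rcases lt_or_ge r o.length with h | h
      · exact Or.inl ⟨h, by rw [List.getD_append _ _ _ _ h]⟩
      · obtain rfl : r = o.length := by omega
        exact Or.inr ⟨getD_append_cons_length o x [], fun r' hr' => ⟨hr', hall _ (getD_mem hr')⟩⟩
    | cons z o₃ =>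
      obtain ⟨hde, htl, hzx⟩ := dropWhile_lt_eq_cons hdw
      simp only [colInsert, hdw, List.headD_cons]
      set t := o.takeWhile (fun y => decide (y < x))
      have hlen : (t ++ x :: o₃).length = o.length := by
        conv_rhs => rw [hde]
        simp
      refine ⟨by omega, by omega, fun r hr => ?_⟩
      rw [hlen] at hr
      rcases lt_trichotomy r t.length with h | rfl | h
      · refine Or.inl ⟨hr, ?_⟩
        conv_lhs => rw [hde]
        rw [List.getD_append _ _ _ _ h, List.getD_append _ _ _ _ h]
      · refine Or.inr ⟨getD_append_cons_length t x o₃, fun r' hr' => ⟨by omega, ?_⟩⟩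
        conv_lhs => rw [hde]
        rw [List.getD_append _ _ _ _ hr']
        exact htl _ (getD_mem hr')
      · refine Or.inl ⟨hr, ?_⟩
        conv_lhs => rw [hde]
        rw [getD_append_cons_of_length_lt _ _ h, getD_append_cons_of_length_lt _ _ h]

lemma dominates_of_isInsertionOf {c t c₃ o H : List ℕ} {x w : ℕ}
    (hde : c = t ++ x :: c₃) (ht : ∀ y ∈ t, y < w) (hwx : w ≤ x)
    (hdom : Dominates c o) (hH : IsInsertionOf x o H) : Dominates (t ++ w :: c₃) H := by
  have hx : ∀ r < o.length, r = t.length → x ≤ o.getD r 0 := by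
    rintro r hr rfl
    simpa [hde, getD_append_cons_length] using hdom.2 _ hr
  constructor
  · have hlc : (t ++ w :: c₃).length = c.length := by simp [hde]
    rcases Nat.lt_or_ge H.length (o.length + 1) with h | h
    · have := hdom.1; omega
    · have hall := hH.2.1 (by have := hH.1; omega)
      rcases Nat.lt_or_ge t.length o.length with h2 | h2
      · exact absurd (hx _ h2 rfl) (not_le.mpr (hall _ (getD_mem h2)))
      · have := hH.1; simp [hde] at hlc ⊢; omega
  · intro r hr
    rcases hH.2.2 r hr with ⟨hro, hoH⟩ | ⟨hHx, hmin⟩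
    · calc (t ++ w :: c₃).getD r 0 ≤ (t ++ x :: c₃).getD r 0 := getD_append_cons_mono c₃ hwx r
        _ ≤ o.getD r 0 := by rw [← hde]; exact hdom.2 r hro
        _ ≤ H.getD r 0 := hoH
    · rw [hHx]
      rcases lt_trichotomy r t.length with h | rfl | h
      · rw [List.getD_append _ _ _ _ h]
        exact (ht _ (getD_mem h)).le.trans hwx
      · rw [getD_append_cons_length]; exact hwx
      · obtain ⟨h1, h2⟩ := hmin t.length h
        exact absurd (hx _ h1 rfl) (not_le.mpr h2)

lemma isSemistandard_colInsert {T : List (List ℕ)} (h : IsSemistandard T) (w : ℕ) :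
    IsSemistandard (colInsert w T) := by
  induction T generalizing w with
  | nil => exact ⟨by simp [colInsert], by simp [colInsert], by simp [colInsert]⟩
  | cons c rest ih =>
    have hcc : c.IsChain (· < ·) := h.2.1 c (by simp)
    cases hdw : c.dropWhile (fun y => decide (y < w)) with
    | nil =>
      simp only [colInsert, hdw]
      exact .cons (by simp) (isChain_lt_append_singleton hcc (forall_lt_of_dropWhile_lt_eq_nil hdw))
        h.tail (h.dominates_headD.append_singleton w)
    | cons x c₃ =>
      obtain ⟨hde, htl, hwx⟩ := dropWhile_lt_eq_cons hdw
      simp only [colInsert, hdw]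
      exact .cons (by simp) (isChain_lt_replace (hde ▸ hcc) htl hwx) (ih h.tail x)
        (dominates_of_isInsertionOf hde htl hwx h.dominates_headD
          (isInsertionOf_headD_colInsert x rest))

end Semistandard

section Bumping

lemma le_getD_headD_of_dropWhile_eq_cons {c c₃ : List ℕ} {rest : List (List ℕ)} {w x : ℕ}
    (h : IsSemistandard (c :: rest)) (hdw : c.dropWhile (fun y => decide (y < w)) = x :: c₃)
    (hlt : (c.takeWhile (fun y => decide (y < w))).length < (rest.headD []).length) :
    x ≤ (rest.headD []).getD (c.takeWhile (fun y => decide (y < w))).length 0 := by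
  obtain ⟨hde, -, -⟩ := dropWhile_lt_eq_cons hdw
  have := h.dominates_headD.2 _ hlt
  generalize c.takeWhile (fun y => decide (y < w)) = t at hde this ⊢
  rwa [hde, getD_append_cons_length] at this

lemma newBoxRow_le {T : List (List ℕ)} (hT : IsSemistandard T) {w i : ℕ}
    (hi : i < (T.headD []).length → w ≤ (T.headD []).getD i 0) : newBoxRow w T ≤ i + 1 := by
  induction T generalizing w i with
  | nil => simp [newBoxRow]
  | cons c rest ih =>
    simp only [List.headD_cons] at hi
    cases hdw : c.dropWhile (fun y => decide (y < w)) with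
    | nil =>
      have hall := forall_lt_of_dropWhile_lt_eq_nil hdw
      simp only [newBoxRow, hdw]
      by_contra! hlt
      exact absurd (hi (by omega)) (not_le.mpr (hall _ (getD_mem (by omega))))
    | cons x c₃ =>
      obtain ⟨hde, htl, -⟩ := dropWhile_lt_eq_cons hdw
      simp only [newBoxRow, hdw]
      have hti : (c.takeWhile (fun y => decide (y < w))).length ≤ i := by
        by_contra! hlt
        have hci := hi (by rw [hde]; simp; omega)
        rw [hde, List.getD_append _ _ _ _ hlt] at hci
        exact absurd hci (not_le.mpr (htl _ (getD_mem hlt)))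
      have := ih hT.tail (le_getD_headD_of_dropWhile_eq_cons hT hdw)
      omega

lemma newBoxRow_lt_newBoxRow_colInsert {T : List (List ℕ)} (hT : IsSemistandard T) {w w' : ℕ}
    (hww : w < w') : newBoxRow w T < newBoxRow w' (colInsert w T) := by
  induction T generalizing w w' with
  | nil => simp [colInsert, newBoxRow, hww]
  | cons c rest ih =>
    cases hdw : c.dropWhile (fun y => decide (y < w)) with
    | nil =>
      have hall := forall_lt_of_dropWhile_lt_eq_nil hdw
      have hall' : (c ++ [w]).dropWhile (fun y => decide (y < w')) = [] :=
        List.dropWhile_eq_nil_iff.mpr fun y hy => by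
          rcases List.mem_append.mp hy with hy | hy
          · simpa using (hall y hy).trans hww
          · simpa [List.mem_singleton.mp hy] using hww
      simp [colInsert, newBoxRow, hdw, hall']
    | cons x c₃ =>
      obtain ⟨hde, htl, hwx⟩ := dropWhile_lt_eq_cons hdw
      have hrow := newBoxRow_le hT.tail (le_getD_headD_of_dropWhile_eq_cons hT hdw)
      have hc := hT.2.1 c (by simp)
      simp only [colInsert, newBoxRow, hdw]
      generalize c.takeWhile (fun y => decide (y < w)) = t at hde htl hrow ⊢
      subst hde
      have hdw' : (t ++ w :: c₃).dropWhile (fun y => decide (y < w')) =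
          c₃.dropWhile (fun y => decide (y < w')) := by
        rw [List.append_cons, List.dropWhile_append_of_pos]
        intro y hy
        rcases List.mem_append.mp hy with hy | hy
        · simpa using (htl y hy).trans hww
        · simpa [List.mem_singleton.mp hy] using hww
      rw [hdw']
      cases hdw₃ : c₃.dropWhile (fun y => decide (y < w')) with
      | nil =>
        simp only [List.length_append, List.length_cons]
        omega
      | cons x' c₄ =>
        have hx' : x' ∈ c₃ := (List.dropWhile_sublist _).mem (hdw₃ ▸ List.mem_cons_self)
        exact ih hT.tail (lt_of_isChain_append_cons hc x' hx')

end Bumping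

section ReverseBumping

lemma countP_le_append_cons {t c₃ : List ℕ} {w x : ℕ} (hc : (t ++ x :: c₃).IsChain (· < ·))
    (ht : ∀ y ∈ t, y < w) (hwx : w ≤ x) :
    (t ++ w :: c₃).countP (fun y => decide (y ≤ x)) = t.length + 1 := by
  have h₁ : t.countP (fun y => decide (y ≤ x)) = t.length :=
    List.countP_eq_length.mpr fun y hy => by simpa using ((ht y hy).trans_le hwx).le
  have h₃ : c₃.countP (fun y => decide (y ≤ x)) = 0 :=
    List.countP_eq_zero.mpr fun y hy => by simpa using lt_of_isChain_append_cons hc y hy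
  simp [List.countP_append, h₁, h₃, hwx]

/-- Reverse bumping: given the bumped letter `x`, the new column determines the old one and the
inserted letter. -/
lemma eq_of_append_cons_eq {t c₃ t' c₃' : List ℕ} {w w' x : ℕ}
    (hc : (t ++ x :: c₃).IsChain (· < ·)) (ht : ∀ y ∈ t, y < w) (hwx : w ≤ x)
    (hc' : (t' ++ x :: c₃').IsChain (· < ·)) (ht' : ∀ y ∈ t', y < w') (hwx' : w' ≤ x)
    (h : t ++ w :: c₃ = t' ++ w' :: c₃') : w = w' ∧ t ++ x :: c₃ = t' ++ x :: c₃' := by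
  have hlen : t.length = t'.length := by
    have := congrArg (List.countP fun y => decide (y ≤ x)) h
    rw [countP_le_append_cons hc ht hwx, countP_le_append_cons hc' ht' hwx'] at this
    omega
  obtain ⟨rfl, htail⟩ := List.append_inj h hlen
  obtain ⟨rfl, rfl⟩ := List.cons.inj htail
  exact ⟨rfl, rfl⟩

lemma eq_of_colInsert_eq {T T' : List (List ℕ)} (hT : IsSemistandard T)
    (hT' : IsSemistandard T') {w w' : ℕ} (he : colInsert w T = colInsert w' T')
    (hcol : newBoxCol w T = newBoxCol w' T') (hsh : colShape T = colShape T') :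
    w = w' ∧ T = T' := by
  induction T generalizing T' w w' with
  | nil =>
    obtain rfl : T' = [] := List.eq_nil_of_length_eq_zero (by simpa [colShape] using hsh.symm)
    simpa [colInsert] using he
  | cons c rest ih =>
    obtain ⟨c', rest', rfl⟩ : ∃ c' rest', T' = c' :: rest' := by
      cases T' with
      | nil => simp [colShape] at hsh
      | cons c' rest' => exact ⟨c', rest', rfl⟩
    simp only [colShape, List.map_cons, List.cons.injEq] at hsh
    cases hdw : c.dropWhile (fun y => decide (y < w)) <;>
      cases hdw' : c'.dropWhile (fun y => decide (y < w')) <;>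
      simp only [colInsert, newBoxCol, hdw, hdw', List.cons.injEq, Nat.add_right_cancel_iff]
        at he hcol
    case nil.nil =>
      obtain ⟨rfl, h⟩ := List.append_inj he.1 hsh.1
      exact ⟨(List.cons.inj h).1, by rw [he.2]⟩
    case cons.cons x c₃ x' c₃' =>
      obtain ⟨hde, htl, hwx⟩ := dropWhile_lt_eq_cons hdw
      obtain ⟨hde', htl', hwx'⟩ := dropWhile_lt_eq_cons hdw'
      obtain ⟨rfl, rfl⟩ := ih hT.tail hT'.tail he.2 hcol hsh.2
      obtain ⟨rfl, hcc⟩ := eq_of_append_cons_eq (hde ▸ hT.2.1 c (by simp)) htl hwx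
        (hde' ▸ hT'.2.1 c' (by simp)) htl' hwx' he.1
      exact ⟨rfl, by rw [hde, hde', hcc]⟩
    all_goals simp at hcol

end ReverseBumping

section ColumnInsertion

lemma insertCol_cons (w : ℕ) (b : List ℕ) (T : List (List ℕ)) :
    insertCol (w :: b) T = insertCol b (colInsert w T) :=
  rfl

lemma insertCol_append_singleton (b : List ℕ) (w : ℕ) (T : List (List ℕ)) :
    insertCol (b ++ [w]) T = colInsert w (insertCol b T) := by
  simp [insertCol, List.foldl_append]

lemma isSemistandard_insertCol {T : List (List ℕ)} (h : IsSemistandard T) (b : List ℕ) :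
    IsSemistandard (insertCol b T) := by
  induction b generalizing T with
  | nil => exact h
  | cons w b ih => exact ih (isSemistandard_colInsert h w)

lemma getD_colShape_le_insertCol (b : List ℕ) (T : List (List ℕ)) (j : ℕ) :
    (colShape T).getD j 0 ≤ (colShape (insertCol b T)).getD j 0 := by
  induction b generalizing T with
  | nil => exact le_rfl
  | cons w b ih => exact (getD_colShape_le_colInsert w T j).trans (ih (colInsert w T))

lemma sum_colShape_insertCol (b : List ℕ) (T : List (List ℕ)) :
    (colShape (insertCol b T)).sum = (colShape T).sum + b.length := by
  induction b generalizing T with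
  | nil => rfl
  | cons w b ih =>
    rw [insertCol_cons, ih, colShape_colInsert, sum_addBox, List.length_cons]
    omega

lemma getD_colShape_insertCol_lt_newBoxRow {T : List (List ℕ)} (hT : IsSemistandard T)
    {b : List ℕ} (hb : b.Pairwise (· < ·)) {w : ℕ} (hbw : ∀ y ∈ b, y < w) {j : ℕ}
    (hj : (colShape T).getD j 0 < (colShape (insertCol b T)).getD j 0) :
    (colShape (insertCol b T)).getD j 0 < newBoxRow w (insertCol b T) := by
  induction b using List.reverseRecOn generalizing w with
  | nil => exact absurd hj (lt_irrefl _)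
  | append_singleton b₀ u ih =>
    rw [List.pairwise_append] at hb
    have hb₀u : ∀ y ∈ b₀, y < u := fun y hy => hb.2.2 y hy u (by simp)
    have huw : u < w := hbw u (by simp)
    rw [insertCol_append_singleton] at hj ⊢
    have hV₀ := isSemistandard_insertCol hT b₀
    have hbump := newBoxRow_lt_newBoxRow_colInsert hV₀ huw
    by_cases hju : newBoxCol u (insertCol b₀ T) = j
    · subst hju
      rw [← newBoxRow_eq_getD_colShape_colInsert]
      exact hbump
    · rw [colShape_colInsert, getD_addBox_of_ne (newBoxCol_le_length_colShape _ _) hju]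
        at hj ⊢
      exact (ih hb.1 hb₀u hj).trans hbump

lemma newBoxRow_lt_of_newBoxCol_ne {T T' : List (List ℕ)} (hT : IsSemistandard T)
    (hsh : colShape T = colShape T') {b b' : List ℕ} (hb : b.Pairwise (· < ·)) {w w' : ℕ}
    (hbw : ∀ y ∈ b, y < w)
    (hS : colShape (colInsert w (insertCol b T)) = colShape (colInsert w' (insertCol b' T')))
    (hne : newBoxCol w (insertCol b T) ≠ newBoxCol w' (insertCol b' T')) :
    newBoxRow w' (insertCol b' T') < newBoxRow w (insertCol b T) := by
  have hrow' := newBoxRow_eq_getD_colShape_colInsert w' (insertCol b' T')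
  have hgrow := newBoxRow_eq_getD_colShape_add_one w' (insertCol b' T')
  have hmono := getD_colShape_le_insertCol b' T' (newBoxCol w' (insertCol b' T'))
  rw [← hS, colShape_colInsert, getD_addBox_of_ne (newBoxCol_le_length_colShape _ _) hne]
    at hrow'
  rw [hrow'] at hgrow ⊢
  exact getD_colShape_insertCol_lt_newBoxRow hT hb hbw (by rw [hsh]; omega)

lemma eq_of_insertCol_eq {T T' : List (List ℕ)} (hT : IsSemistandard T)
    (hT' : IsSemistandard T') (hsh : colShape T = colShape T') {b b' : List ℕ}
    (hb : b.Pairwise (· < ·)) (hb' : b'.Pairwise (· < ·)) (hlen : b.length = b'.length)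
    (h : insertCol b T = insertCol b' T') : b = b' ∧ T = T' := by
  induction b using List.reverseRecOn generalizing b' with
  | nil =>
    obtain rfl : b' = [] := List.eq_nil_of_length_eq_zero hlen.symm
    exact ⟨rfl, h⟩
  | append_singleton b₀ w ih =>
    obtain ⟨b₀', w', rfl⟩ : ∃ b₀' w', b' = b₀' ++ [w'] := by
      rcases List.eq_nil_or_concat b' with rfl | ⟨b₀', w', rfl⟩
      · simp at hlen
      · exact ⟨b₀', w', List.concat_eq_append⟩
    rw [List.pairwise_append] at hb hb'
    have hbw : ∀ y ∈ b₀, y < w := fun y hy => hb.2.2 y hy w (by simp)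
    have hbw' : ∀ y ∈ b₀', y < w' := fun y hy => hb'.2.2 y hy w' (by simp)
    rw [insertCol_append_singleton, insertCol_append_singleton] at h
    have hS := congrArg colShape h
    have hcol : newBoxCol w (insertCol b₀ T) = newBoxCol w' (insertCol b₀' T') := by
      by_contra hne
      exact lt_asymm (newBoxRow_lt_of_newBoxCol_ne hT hsh hb.1 hbw hS hne)
        (newBoxRow_lt_of_newBoxCol_ne hT' hsh.symm hb'.1 hbw' hS.symm (Ne.symm hne))
    have hV := isSemistandard_insertCol hT b₀
    have hV' := isSemistandard_insertCol hT' b₀'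
    have hshV : colShape (insertCol b₀ T) = colShape (insertCol b₀' T') := by
      refine addBox_injective (one_le_of_mem_colShape hV) (one_le_of_mem_colShape hV')
        (newBoxCol_le_length_colShape w _) (hcol ▸ newBoxCol_le_length_colShape w' _) ?_
      rw [← colShape_colInsert, hS, colShape_colInsert, hcol]
    obtain ⟨rfl, hVV⟩ := eq_of_colInsert_eq hV hV' h hcol hshV
    obtain ⟨rfl, rfl⟩ := ih hb.1 hb'.1 (by simpa using hlen) hVV
    exact ⟨rfl, rfl⟩

end ColumnInsertion

section Shape

lemma countP_le_eq_count_add_countP_succ_le (v : ℕ) (l : List ℕ) :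
    l.countP (fun c => decide (v ≤ c)) =
      l.count v + l.countP (fun c => decide (v + 1 ≤ c)) := by
  induction l with
  | nil => simp
  | cons a l ih =>
    simp only [List.countP_cons, List.count_cons, ih, beq_iff_eq, decide_eq_true_eq]
    split_ifs <;> omega

lemma eq_of_countP_le_eq {l₁ l₂ : List ℕ} (h₁ : l₁.Pairwise (· ≥ ·)) (h₂ : l₂.Pairwise (· ≥ ·))
    (hp₁ : ∀ y ∈ l₁, 1 ≤ y) (hp₂ : ∀ y ∈ l₂, 1 ≤ y)
    (h : ∀ i, 1 ≤ i → l₁.countP (fun c => decide (i ≤ c)) = l₂.countP (fun c => decide (i ≤ c))) :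
    l₁ = l₂ := by
  refine (List.perm_iff_count.mpr fun v => ?_).eq_of_pairwise' h₁ h₂
  cases v with
  | zero =>
    rw [List.count_eq_zero_of_not_mem (fun hm => by simpa using hp₁ 0 hm),
      List.count_eq_zero_of_not_mem (fun hm => by simpa using hp₂ 0 hm)]
  | succ v =>
    have e₁ := countP_le_eq_count_add_countP_succ_le (v + 1) l₁
    have e₂ := countP_le_eq_count_add_countP_succ_le (v + 1) l₂
    have := h (v + 1) (by omega)
    have := h (v + 1 + 1) (by omega)
    omega

lemma rowLen_eq_countP_colShape (T : List (List ℕ)) (i : ℕ) :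
    rowLen T i = (colShape T).countP (fun c => decide (i ≤ c)) := by
  rw [colShape, List.countP_map]
  rfl

lemma pairwise_ge_colShape {T : List (List ℕ)} (hT : IsSemistandard T) :
    (colShape T).Pairwise (· ≥ ·) := by
  rw [← List.isChain_iff_pairwise, colShape, List.isChain_map]
  exact hT.2.2.imp fun _ _ h => h.1

lemma colShape_eq_of_hasShape {T₁ T₂ : List (List ℕ)} {lam : List ℕ}
    (hT₁ : IsSemistandard T₁) (hT₂ : IsSemistandard T₂)
    (hs₁ : hasShape T₁ lam) (hs₂ : hasShape T₂ lam) : colShape T₁ = colShape T₂ :=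
  eq_of_countP_le_eq (pairwise_ge_colShape hT₁) (pairwise_ge_colShape hT₂)
    (one_le_of_mem_colShape hT₁) (one_le_of_mem_colShape hT₂) fun i hi => by
      rw [← rowLen_eq_countP_colShape, ← rowLen_eq_countP_colShape, hs₁ i hi, hs₂ i hi]

end Shape

lemma eq_of_suc_eq {T₁ T₂ : List (List ℕ)} (hT₁ : IsSemistandard T₁) (hT₂ : IsSemistandard T₂)
    (hpos₁ : ∀ x ∈ T₁.headD [], 1 ≤ x) (hpos₂ : ∀ x ∈ T₂.headD [], 1 ≤ x)
    (hsh : colShape T₁ = colShape T₂) (h : suc T₁ = suc T₂) : T₁ = T₂ := by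
  match T₁, T₂, hsh with
  | [], [], _ => rfl
  | c₁ :: r₁, c₂ :: r₂, hsh =>
    simp only [colShape, List.map_cons, List.cons.injEq] at hsh
    have hc₁ := List.isChain_iff_pairwise.mp (hT₁.2.1 c₁ (by simp))
    have hc₂ := List.isChain_iff_pairwise.mp (hT₂.2.1 c₂ (by simp))
    have hlen : (redSeq c₁).length = (redSeq c₂).length := by
      have := congrArg (fun T => (colShape T).sum) h
      simp only [suc, sum_colShape_insertCol] at this
      rw [show colShape r₁ = colShape r₂ from hsh.2] at this
      omega
    obtain ⟨hred, rfl⟩ := eq_of_insertCol_eq hT₁.tail hT₂.tail hsh.2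
      (hc₁.sublist List.filter_sublist) (hc₂.sublist List.filter_sublist) hlen h
    rw [eq_of_redSeq_eq hc₁ hc₂ hpos₁ hpos₂ hsh.1 hred]

lemma IsTableau.one_le_of_mem_headD {m : ℕ} {T : List (List ℕ)} (hT : IsTableau m T) :
    ∀ x ∈ T.headD [], 1 ≤ x := by
  cases T with
  | nil => simp
  | cons c rest => exact fun x hx => (hT.2.2.1 c (by simp) x hx).1

theorem stmt18_general (n : ℕ) (lam : List ℕ)
    (T₁ T₂ : List (List ℕ))
    (hT₁ : IsTableau (2 * n) T₁) (hsh₁ : hasShape T₁ lam)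
    (hT₂ : IsTableau (2 * n) T₂) (hsh₂ : hasShape T₂ lam)
    (h : suc T₁ = suc T₂) : T₁ = T₂ :=
  eq_of_suc_eq hT₁.isSemistandard hT₂.isSemistandard hT₁.one_le_of_mem_headD
    hT₂.one_le_of_mem_headD
    (colShape_eq_of_hasShape hT₁.isSemistandard hT₂.isSemistandard hsh₁ hsh₂) h

theorem stmt18 (n : ℕ) (hn : 1 ≤ n) (lam : List ℕ)
    (hlam : IsPartition lam) (hlen : lam.length ≤ 2 * n)
    (T₁ T₂ : List (List ℕ))
    (hT₁ : IsTableau (2 * n) T₁) (hsh₁ : hasShape T₁ lam)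
    (hT₂ : IsTableau (2 * n) T₂) (hsh₂ : hasShape T₂ lam)
    (h : suc T₁ = suc T₂) : T₁ = T₂ :=
  stmt18_general n lam T₁ T₂ hT₁ hsh₁ hT₂ hsh₂ h
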